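/- Let p be a probability-distribution matrix with coupling polynomial f and let g ≥ 1. Then the sum, over all tuples x, y ∈ {0,…,m}^g and u, v ∈ {0,…,M−1}^g satisfying Σ_{k=1}^{g}(x_k − y_k) = 0 and M ∣ Σ_{k=1}^{g}(u_k − v_k), of the product ∏_{k=1}^{g} p_{x_k,u_k} p_{y_k,v_k}, equals Σ_{M∣b}[f(X,Y)^g · f(X^{−1},Y^{−1})^g]_{0,b}. In probabilistic terms: if the 2g pairs are drawn independently with law p, this is the probability that a cycle-2g candidate all of whose 2g base-matrix entries are distinct satisfies both the partitioning condition (alternating sum of partition values equal to zero) and the relocation condition (alternating sum of relocation values divisible by M); the case g = 4 gives the term with weight w_4 in the paper's cycle-8 expectation formula. -/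

import Mathlib

/-!
Expanding `f(X,Y)^g · f(X⁻¹,Y⁻¹)^g` monomial by monomial, the quadruple of tuples `(x, y, u, v)`
contributes `∏ₖ p_{xₖ,uₖ} p_{yₖ,vₖ}` at the exponent `(Σₖ (xₖ − yₖ), Σₖ (uₖ − vₖ))`. Summing the
coefficients at the exponents `(0, b)` with `M ∣ b` therefore collects exactly the quadruples
satisfying both conditions.
-/

open scoped Classical

/-- The coupling polynomial with exponents scaled by `s`:
`f(X^s, Y^s) = ∑_{i=0}^{m} ∑_{j=0}^{M-1} p_{i,j} X^{s·i} Y^{s·j}`,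
as an element of the group algebra of `ℤ × ℤ` over `ℝ`. -/
noncomputable def couplingPoly (m M : ℕ) (p : Fin (m + 1) → Fin M → ℝ) (s : ℤ) :
    AddMonoidAlgebra ℝ (ℤ × ℤ) :=
  ∑ i : Fin (m + 1), ∑ j : Fin M,
    AddMonoidAlgebra.single (s * (i : ℤ), s * (j : ℤ)) (p i j)

namespace AddMonoidAlgebra

variable {k G ι : Type*}

theorem sum_single_pow [CommSemiring k] [AddCommMonoid G] [Fintype ι] (e : ι → G) (c : ι → k)
    (n : ℕ) :
    (∑ i, single (e i) (c i)) ^ n = ∑ x : Fin n → ι, single (∑ j, e (x j)) (∏ j, c (x j)) := by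
  simp only [Fintype.sum_pow, prod_single]

theorem coeff_sum_single [Semiring k] (s : Finset ι) (e : ι → G) (c : ι → k) (d : G) :
    (∑ i ∈ s, single (e i) (c i)).coeff d = ∑ i ∈ s with e i = d, c i := by
  simp [Finsupp.finsetSum_apply, Finsupp.single_apply, Finset.sum_filter]

theorem finsum_mem_coeff_sum_single [Semiring k] (s : Finset ι) (e : ι → G) (c : ι → k)
    (S : Set G) :
    ∑ᶠ d ∈ S, (∑ i ∈ s, single (e i) (c i)).coeff d = ∑ i ∈ s with e i ∈ S, c i := by
  rw [← finsum_sum_filter e (s.filter (e · ∈ S)) c]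
  refine finsum_congr fun d => ?_
  rw [coeff_sum_single, finsum_eq_if, Finset.filter_filter]
  split_ifs with hd
  · exact Finset.sum_congr (Finset.filter_congr fun i _ => by grind) fun _ _ => rfl
  · exact (Finset.sum_eq_zero fun i hi => by grind).symm

end AddMonoidAlgebra

open AddMonoidAlgebra

section CouplingPoly

variable {m M : ℕ} (p : Fin (m + 1) → Fin M → ℝ)

theorem couplingPoly_pow (s : ℤ) (g : ℕ) :
    couplingPoly m M p s ^ g =
      ∑ x : Fin g → Fin (m + 1), ∑ u : Fin g → Fin M,
        single (s * ∑ k, (x k : ℤ), s * ∑ k, (u k : ℤ)) (∏ k, p (x k) (u k)) := by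
  rw [couplingPoly, ← Fintype.sum_prod_type', sum_single_pow, ← Fintype.sum_prod_type',
    ← (Equiv.arrowProdEquivProdArrow _ _ _).symm.sum_comp]
  simp [Equiv.arrowProdEquivProdArrow, Finset.mul_sum, ← prod_mk_sum]

theorem couplingPoly_pow_mul_pow (g : ℕ) :
    couplingPoly m M p 1 ^ g * couplingPoly m M p (-1) ^ g =
      ∑ t : (Fin g → Fin (m + 1)) × (Fin g → Fin (m + 1)) × (Fin g → Fin M) × (Fin g → Fin M),
        single (∑ k, ((t.1 k : ℤ) - t.2.1 k), ∑ k, ((t.2.2.1 k : ℤ) - t.2.2.2 k))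
          (∏ k, p (t.1 k) (t.2.2.1 k) * p (t.2.1 k) (t.2.2.2 k)) := by
  simp only [couplingPoly_pow, Finset.sum_mul_sum, single_mul_single, Fintype.sum_prod_type]
  refine Fintype.sum_congr _ _ fun x => Fintype.sum_congr _ _ fun y => Fintype.sum_congr _ _
    fun u => Fintype.sum_congr _ _ fun v => ?_
  simp [Finset.sum_sub_distrib, Finset.prod_mul_distrib, ← sub_eq_add_neg]

end CouplingPoly

theorem cycle2g_activeness_probability_general (m M : ℕ) (g : ℕ)
    (p : Fin (m + 1) → Fin M → ℝ) :
    (∑ t ∈ Finset.univ.filter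
        (fun t : (Fin g → Fin (m + 1)) × (Fin g → Fin (m + 1)) ×
                 (Fin g → Fin M) × (Fin g → Fin M) =>
          (∑ k : Fin g, ((t.1 k : ℤ) - (t.2.1 k : ℤ))) = 0 ∧
          (M : ℤ) ∣ ∑ k : Fin g, ((t.2.2.1 k : ℤ) - (t.2.2.2 k : ℤ))),
        ∏ k : Fin g, p (t.1 k) (t.2.2.1 k) * p (t.2.1 k) (t.2.2.2 k)) =
    ∑ᶠ b ∈ {b : ℤ | (M : ℤ) ∣ b},
      (couplingPoly m M p 1 ^ g * couplingPoly m M p (-1) ^ g).coeff (0, b) := by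
  rw [couplingPoly_pow_mul_pow, ← finsum_mem_image (Prod.mk_right_injective 0).injOn,
    finsum_mem_coeff_sum_single]
  refine Finset.sum_congr (Finset.filter_congr fun t _ => ?_) fun _ _ => rfl
  simp only [Set.mem_image, Set.mem_ofPred_eq, Prod.ext_iff]
  grind

/-- For a probability-distribution matrix `p` with coupling
polynomial `f` and any `g ≥ 1`, the sum over all tuples
`x, y ∈ {0,…,m}^g`, `u, v ∈ {0,…,M−1}^g` satisfying
`Σₖ (xₖ − yₖ) = 0` and `M ∣ Σₖ (uₖ − vₖ)`, of `∏ₖ p_{xₖ,uₖ} p_{yₖ,vₖ}`,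
equals `Σ_{M∣b}[f(X,Y)^g · f(X⁻¹,Y⁻¹)^g]_{0,b}`.  This is the probability
that a cycle-2g candidate with `2g` distinct base-matrix entries satisfies
both the partitioning and the relocation conditions. -/
theorem cycle2g_activeness_probability (m M : ℕ) (hM : 1 ≤ M) (g : ℕ) (hg : 1 ≤ g)
    (p : Fin (m + 1) → Fin M → ℝ)
    (hp : ∀ i j, 0 ≤ p i j)
    (hsum : ∑ i : Fin (m + 1), ∑ j : Fin M, p i j = 1) :
    (∑ t ∈ Finset.univ.filter
        (fun t : (Fin g → Fin (m + 1)) × (Fin g → Fin (m + 1)) ×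
                 (Fin g → Fin M) × (Fin g → Fin M) =>
          (∑ k : Fin g, ((t.1 k : ℤ) - (t.2.1 k : ℤ))) = 0 ∧
          (M : ℤ) ∣ ∑ k : Fin g, ((t.2.2.1 k : ℤ) - (t.2.2.2 k : ℤ))),
        ∏ k : Fin g, p (t.1 k) (t.2.2.1 k) * p (t.2.1 k) (t.2.2.2 k)) =
    ∑ᶠ b ∈ {b : ℤ | (M : ℤ) ∣ b},
      (couplingPoly m M p 1 ^ g * couplingPoly m M p (-1) ^ g).coeff (0, b) :=
  cycle2g_activeness_probability_general m M g p
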